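/- Let 1 ≤ p < ∞, w : ℤ → ℂ a bounded weight with w_k ≠ 0 for all k, B_w the bilateral weighted backward shift on X = ℓ^p(ℤ, ℂ), F a filter family on ℕ, and integers 1 ≤ r₁ < r₂ < … < r_N (with r₀ = 0). Then the following are equivalent: (i) (B_w^{r₁}, …, B_w^{r_N}) is d-F, i.e. for all nonempty open U₀, U₁, …, U_N ⊆ X the set {k ∈ ℕ : B_w^{-r₁k}(U₁) ∩ … ∩ B_w^{-r_N k}(U_N) ∩ U₀ ≠ ∅} belongs to F; (ii) the direct sum operator ⊕_{0 ≤ s < l ≤ N} B_w^{r_l − r_s}, acting coordinatewise on X^{N(N+1)/2}, is an F-operator; (iii) for every M > 0, every j ∈ ℤ and all 0 ≤ s < l ≤ N, both {m ∈ ℕ : ∏_{i=j+1}^{j+m(r_l−r_s)} |w_i| > M} ∈ F and {m ∈ ℕ : ∏_{i=j−m(r_l−r_s)+1}^{j} |w_i| < 1/M} ∈ F. -/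

import Mathlib

open Filter Set
open scoped ENNReal

namespace BilShiftAux
set_option linter.unusedSectionVars false
set_option maxHeartbeats 1000000

lemma Icc_succ_left' (a b : ℤ) : Finset.Icc (a+1) b = Finset.Ioc a b := by
  ext x; simp only [Finset.mem_Icc, Finset.mem_Ioc]; omega

lemma prod_Ioc_consec {M : Type*} [CommMonoid M] (f : ℤ → M) {a b c : ℤ} (hab : a ≤ b)
    (hbc : b ≤ c) :
    (∏ i ∈ Finset.Ioc a b, f i) * ∏ i ∈ Finset.Ioc b c, f i = ∏ i ∈ Finset.Ioc a c, f i := by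
  rw [← Finset.prod_union (by
      rw [Finset.disjoint_left]; intro x hx hx'
      simp only [Finset.mem_Ioc] at hx hx'; omega),
    Finset.Ioc_union_Ioc_eq_Ioc hab hbc]

lemma prod_Ioc_succ_top' {M : Type*} [CommMonoid M] (f : ℤ → M) {a b : ℤ} (hab : a ≤ b) :
    (∏ i ∈ Finset.Ioc a (b+1), f i) = (∏ i ∈ Finset.Ioc a b, f i) * f (b+1) := by
  rw [← prod_Ioc_consec f hab (by omega : b ≤ b+1)]
  congr 1
  have : Finset.Ioc b (b+1) = {b+1} := by
    ext x; simp only [Finset.mem_Ioc, Finset.mem_singleton]; omega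
  rw [this, Finset.prod_singleton]

noncomputable abbrev XSp (p : ℝ≥0∞) := lp (fun _ : ℤ => ℂ) p

section Main

variable (p : ℝ≥0∞) [Fact (1 ≤ p)] (w : ℤ → ℂ)

lemma pne0 : p ≠ 0 := (lt_of_lt_of_le zero_lt_one Fact.out).ne'

lemma ptr (hp : p ≠ ∞) : 0 < p.toReal := ENNReal.toReal_pos (pne0 p) hp

lemma norm_single' (hp : p ≠ ∞) (k : ℤ) (a : ℂ) : ‖(lp.single p k a : XSp p)‖ = ‖a‖ :=
  lp.norm_single (E := fun _ : ℤ => ℂ) (lt_of_lt_of_le zero_lt_one (Fact.out : 1 ≤ p)) k a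

lemma single_eq_smul (k : ℤ) (a : ℂ) : (lp.single p k a : XSp p) = a • lp.single p k 1 := by
  have h1 : (a : ℂ) • (1 : ℂ) = a := by simp
  calc (lp.single p k a : XSp p) = lp.single p k (a • (1:ℂ)) := by rw [h1]
    _ = a • lp.single p k 1 := lp.single_smul (E := fun _ : ℤ => ℂ) p k a (1:ℂ)

lemma coord_lipschitz (i : ℤ) : LipschitzWith 1 (fun f : XSp p => (f : ℤ → ℂ) i) := by
  refine LipschitzWith.of_dist_le_mul (fun f g => ?_)
  rw [NNReal.coe_one, one_mul, dist_eq_norm, dist_eq_norm]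
  have : ‖(f - g : XSp p) i‖ ≤ ‖f - g‖ := lp.norm_apply_le_norm (pne0 p) (f - g) i
  simpa using this

lemma coord_continuous (i : ℤ) : Continuous (fun f : XSp p => (f : ℤ → ℂ) i) :=
  (coord_lipschitz p i).continuous

lemma B_single (B : XSp p →L[ℂ] XSp p)
    (hB : ∀ k : ℤ, B (lp.single p k 1) = w k • lp.single p (k - 1) 1) (k : ℤ) (a : ℂ) :
    B (lp.single p k a) = w k • lp.single p (k-1) a := by
  rw [single_eq_smul, map_smul, hB k, single_eq_smul p (k-1) a, smul_comm]

end Main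

section Main
variable (p : ℝ≥0∞) [Fact (1 ≤ p)] (w : ℤ → ℂ)

lemma single_coord (k : ℤ) (a : ℂ) (i : ℤ) :
    (lp.single p k a : XSp p) i = if i = k then a else 0 := by
  by_cases h : i = k
  · subst h; simp [lp.single_apply_self]
  · simp [lp.single_apply_ne (E := fun _ : ℤ => ℂ) p k a h, h]

lemma coord_B (hp : p ≠ ∞) (B : XSp p →L[ℂ] XSp p)
    (hB : ∀ k : ℤ, B (lp.single p k 1) = w k • lp.single p (k - 1) 1)
    (f : XSp p) (i : ℤ) : (B f : ℤ → ℂ) i = w (i+1) * f (i+1) := by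
  have hsum := lp.hasSum_single hp f
  have hφ : Continuous (fun g : XSp p => (B g : ℤ → ℂ) i) :=
    (coord_continuous p i).comp B.continuous
  have hψ : Continuous (fun g : XSp p => w (i+1) * (g : ℤ → ℂ) (i+1)) :=
    continuous_const.mul (coord_continuous p (i+1))
  have key : ∀ s : Finset ℤ, (B (∑ k ∈ s, lp.single p k (f k)) : ℤ → ℂ) i
      = w (i+1) * ((∑ k ∈ s, lp.single p k (f k) : XSp p) : ℤ → ℂ) (i+1) := by
    intro s
    rw [map_sum]
    rw [lp.coeFn_sum, Finset.sum_apply, lp.coeFn_sum, Finset.sum_apply]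
    have h1 : ∀ k ∈ s, (B (lp.single p k (f k)) : ℤ → ℂ) i
        = if k = i + 1 then w k * f k else 0 := by
      intro k _
      rw [B_single p w B hB k (f k), lp.coeFn_smul, Pi.smul_apply, single_coord]
      by_cases h : k = i + 1
      · rw [if_pos h, if_pos (by omega)]; simp
      · rw [if_neg h, if_neg (by omega)]; simp
    rw [Finset.sum_congr rfl h1, Finset.sum_ite_eq' s (i+1) (fun k => w k * f k)]
    have h2 : ∀ k ∈ s, (lp.single p k (f k) : XSp p) (i+1)
        = if k = i + 1 then f k else 0 := by
      intro k _
      rw [single_coord]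
      by_cases h : k = i+1
      · rw [if_pos h, if_pos (by omega)]
      · rw [if_neg h, if_neg (by omega)]
    rw [Finset.sum_congr rfl h2, Finset.sum_ite_eq' s (i+1) (fun k => f k), mul_ite, mul_zero]
  have t1 : Tendsto (fun s : Finset ℤ => (B (∑ k ∈ s, lp.single p k (f k)) : ℤ → ℂ) i)
      atTop (nhds ((B f : ℤ → ℂ) i)) := (hφ.tendsto f).comp hsum
  have t2 : Tendsto (fun s : Finset ℤ => (B (∑ k ∈ s, lp.single p k (f k)) : ℤ → ℂ) i)
      atTop (nhds (w (i+1) * f (i+1))) := by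
    have := (hψ.tendsto f).comp hsum
    simp only [Function.comp_def, ← key] at this; exact this
  exact tendsto_nhds_unique t1 t2

lemma coord_Bpow (hp : p ≠ ∞) (B : XSp p →L[ℂ] XSp p)
    (hB : ∀ k : ℤ, B (lp.single p k 1) = w k • lp.single p (k - 1) 1)
    (m : ℕ) (f : XSp p) (i : ℤ) :
    ((B^m) f : ℤ → ℂ) i = (∏ x ∈ Finset.Ioc i (i + (m:ℤ)), w x) * f (i + (m:ℤ)) := by
  induction m generalizing f i with
  | zero => simp
  | succ n ih =>
    have hpow : (B^(n+1)) f = (B^n) (B f) := by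
      rw [pow_succ, ContinuousLinearMap.mul_apply]
    rw [hpow, ih (B f) i, coord_B p w hp B hB f (i + (n:ℤ))]
    have h1 : (∏ x ∈ Finset.Ioc i (i + ((n+1:ℕ):ℤ)), w x)
        = (∏ x ∈ Finset.Ioc i (i + (n:ℤ)), w x) * w (i + (n:ℤ) + 1) := by
      rw [← prod_Ioc_succ_top' w (by omega : i ≤ i + (n:ℤ))]
      congr 1; push_cast; ring
    have h2 : i + ((n+1:ℕ):ℤ) = i + (n:ℤ) + 1 := by push_cast; ring
    rw [h1, h2]; ring

end Main

/-- finite intersection stability for filter families -/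
lemma F_biInter (F : Set (Set ℕ))
    (hFmono : ∀ A ∈ F, ∀ A' : Set ℕ, A ⊆ A' → A' ∈ F)
    (hFinter : ∀ A ∈ F, ∀ A' ∈ F, A ∩ A' ∈ F) (hFne : F.Nonempty)
    {ι : Type*} (S : Finset ι) (f : ι → Set ℕ) (hf : ∀ i ∈ S, f i ∈ F) :
    (⋂ i ∈ S, f i) ∈ F := by
  classical
  induction S using Finset.induction_on with
  | empty =>
    obtain ⟨A, hA⟩ := hFne
    simpa using hFmono A hA _ (Set.subset_univ _)
  | @insert a s hnotmem ih =>
    rw [Finset.set_biInter_insert]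
    exact hFinter _ (hf a (Finset.mem_insert_self a s)) _
      (ih (fun i hi => hf i (Finset.mem_insert_of_mem hi)))

section Main
variable (p : ℝ≥0∞) [Fact (1 ≤ p)] (w : ℤ → ℂ)

/-- forward weight product (as a complex number) -/
noncomputable def P (j : ℤ) (m : ℕ) : ℂ := ∏ x ∈ Finset.Ioc j (j + (m:ℤ)), w x
/-- forward absolute weight product -/
noncomputable def Pa (j : ℤ) (m : ℕ) : ℝ := ∏ x ∈ Finset.Ioc j (j + (m:ℤ)), ‖w x‖
/-- backward absolute weight product -/
noncomputable def Qa (j : ℤ) (m : ℕ) : ℝ := ∏ x ∈ Finset.Ioc (j - (m:ℤ)) j, ‖w x‖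

lemma norm_P (j : ℤ) (m : ℕ) : ‖P w j m‖ = Pa w j m := by
  rw [P, Pa]; exact norm_prod _ _

lemma P_ne_zero (hw0 : ∀ k : ℤ, w k ≠ 0) (j : ℤ) (m : ℕ) : P w j m ≠ 0 := by
  rw [P, Finset.prod_ne_zero_iff]; exact fun i _ => hw0 i

lemma Pa_pos (hw0 : ∀ k : ℤ, w k ≠ 0) (j : ℤ) (m : ℕ) : 0 < Pa w j m := by
  rw [Pa]; exact Finset.prod_pos (fun i _ => norm_pos_iff.mpr (hw0 i))

lemma Qa_pos (hw0 : ∀ k : ℤ, w k ≠ 0) (j : ℤ) (m : ℕ) : 0 < Qa w j m := by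
  rw [Qa]; exact Finset.prod_pos (fun i _ => norm_pos_iff.mpr (hw0 i))

lemma P_zero (j : ℤ) : P w j 0 = 1 := by simp [P]

variable (B : XSp p →L[ℂ] XSp p)

lemma Bpow_single (hp : p ≠ ∞)
    (hB : ∀ k : ℤ, B (lp.single p k 1) = w k • lp.single p (k - 1) 1)
    (m : ℕ) (k : ℤ) (a : ℂ) :
    (B^m) (lp.single p k a) =
      (∏ x ∈ Finset.Ioc (k - (m:ℤ)) k, w x) • lp.single p (k - (m:ℤ)) a := by
  apply lp.ext
  funext i
  rw [coord_Bpow p w hp B hB m (lp.single p k a) i, lp.coeFn_smul, Pi.smul_apply,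
    single_coord, single_coord]
  by_cases h : i = k - (m:ℤ)
  · subst h
    rw [show k - (m:ℤ) + (m:ℤ) = k from by omega, if_pos rfl, if_pos rfl, smul_eq_mul]
  · rw [if_neg (by omega), if_neg h]
    simp

lemma P_inv_mul (hw0 : ∀ k : ℤ, w k ≠ 0) (j : ℤ) (a b : ℕ) :
    (P w j (a+b))⁻¹ * (∏ x ∈ Finset.Ioc (j + (b:ℤ)) (j + (b:ℤ) + (a:ℤ)), w x)
      = (P w j b)⁻¹ := by
  have h2 : (∏ x ∈ Finset.Ioc (j + (b:ℤ)) (j + (b:ℤ) + (a:ℤ)), w x) ≠ 0 := by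
    rw [Finset.prod_ne_zero_iff]; exact fun i _ => hw0 i
  have e2 : P w j b * (∏ x ∈ Finset.Ioc (j + (b:ℤ)) (j + (b:ℤ) + (a:ℤ)), w x)
      = P w j (a+b) := by
    rw [P, P]
    have := prod_Ioc_consec w (show j ≤ j + (b:ℤ) by omega)
      (show j + (b:ℤ) ≤ j + (b:ℤ) + (a:ℤ) by omega)
    rw [this]
    congr 1
    push_cast; ring
  rw [← e2, mul_inv, mul_assoc, inv_mul_cancel₀ h2, mul_one]

/-- finitely supported vector -/
noncomputable def fsV (t : Finset ℤ) (c : ℤ → ℂ) : XSp p := ∑ j ∈ t, lp.single p j (c j)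

/-- approximate right inverse image of `fsV` under `B^m` -/
noncomputable def sAp (m : ℕ) (t : Finset ℤ) (c : ℤ → ℂ) : XSp p :=
  ∑ j ∈ t, (P w j m)⁻¹ • lp.single p (j + (m:ℤ)) (c j)

lemma sAp_zero (t : Finset ℤ) (c : ℤ → ℂ) : sAp p w 0 t c = fsV p t c := by
  rw [sAp, fsV]
  refine Finset.sum_congr rfl (fun j _ => ?_)
  rw [P_zero]
  simp

lemma Bpow_sAp (hp : p ≠ ∞)
    (hB : ∀ k : ℤ, B (lp.single p k 1) = w k • lp.single p (k - 1) 1)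
    (hw0 : ∀ k : ℤ, w k ≠ 0) (a b : ℕ) (t : Finset ℤ) (c : ℤ → ℂ) :
    (B^a) (sAp p w (a+b) t c) = sAp p w b t c := by
  rw [sAp, map_sum, sAp]
  refine Finset.sum_congr rfl (fun j _ => ?_)
  rw [map_smul, Bpow_single p w B hp hB a (j + ((a+b:ℕ):ℤ)) (c j)]
  rw [show j + ((a+b:ℕ):ℤ) - (a:ℤ) = j + (b:ℤ) from by push_cast; ring]
  rw [show j + ((a+b:ℕ):ℤ) = j + (b:ℤ) + (a:ℤ) from by push_cast; ring]
  rw [smul_smul, P_inv_mul w hw0 j a b]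

lemma Bpow_sAp_self (hp : p ≠ ∞)
    (hB : ∀ k : ℤ, B (lp.single p k 1) = w k • lp.single p (k - 1) 1)
    (hw0 : ∀ k : ℤ, w k ≠ 0) (m : ℕ) (t : Finset ℤ) (c : ℤ → ℂ) :
    (B^m) (sAp p w m t c) = fsV p t c := by
  have := Bpow_sAp p w B hp hB hw0 m 0 t c
  rwa [Nat.add_zero, sAp_zero] at this

lemma norm_smul_single_sum_le (hp : p ≠ ∞) (t : Finset ℤ) (c d : ℤ → ℂ) (σ : ℤ → ℤ) :
    ‖∑ j ∈ t, d j • (lp.single p (σ j) (c j) : XSp p)‖ ≤ ∑ j ∈ t, ‖d j‖ * ‖c j‖ := by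
  refine (norm_sum_le _ _).trans (Finset.sum_le_sum (fun j _ => ?_))
  rw [norm_smul, norm_single' p hp]

lemma norm_sAp_le (hp : p ≠ ∞) (m : ℕ) (t : Finset ℤ) (c : ℤ → ℂ) :
    ‖sAp p w m t c‖ ≤ ∑ j ∈ t, ‖c j‖ / Pa w j m := by
  refine (norm_smul_single_sum_le p hp t c _ _).trans (le_of_eq ?_)
  refine Finset.sum_congr rfl (fun j _ => ?_)
  rw [norm_inv, norm_P, div_eq_mul_inv, mul_comm]

lemma norm_Bpow_fsV_le (hp : p ≠ ∞)
    (hB : ∀ k : ℤ, B (lp.single p k 1) = w k • lp.single p (k - 1) 1)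
    (m : ℕ) (t : Finset ℤ) (c : ℤ → ℂ) :
    ‖(B^m) (fsV p t c)‖ ≤ ∑ j ∈ t, Qa w j m * ‖c j‖ := by
  rw [fsV, map_sum]
  have : ∀ j ∈ t, (B^m) (lp.single p j (c j)) =
      (∏ x ∈ Finset.Ioc (j - (m:ℤ)) j, w x) • lp.single p (j - (m:ℤ)) (c j) :=
    fun j _ => Bpow_single p w B hp hB m j (c j)
  rw [Finset.sum_congr rfl this]
  refine (norm_smul_single_sum_le p hp t c _ _).trans (le_of_eq ?_)
  refine Finset.sum_congr rfl (fun j _ => ?_)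
  rw [Qa, ← norm_prod]

lemma exists_ball_fsV (hp : p ≠ ∞) {U : Set (XSp p)} (hU : IsOpen U) (hne : U.Nonempty) :
    ∃ (t : Finset ℤ) (c : ℤ → ℂ) (ε : ℝ), 0 < ε ∧ Metric.ball (fsV p t c) ε ⊆ U := by
  obtain ⟨x, hx⟩ := hne
  obtain ⟨δ, hδ, hball⟩ := Metric.isOpen_iff.mp hU x hx
  have hsum := lp.hasSum_single hp x
  have hev : ∀ᶠ s : Finset ℤ in atTop,
      dist (∑ i ∈ s, lp.single p i (x i)) x < δ/2 :=
    Metric.tendsto_nhds.mp hsum (δ/2) (by linarith)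
  obtain ⟨t, ht⟩ := hev.exists
  refine ⟨t, fun j => x j, δ/2, by linarith, fun y hy => hball ?_⟩
  rw [Metric.mem_ball] at hy ⊢
  calc dist y x ≤ dist y (fsV p t (fun j => x j)) + dist (fsV p t (fun j => x j)) x :=
        dist_triangle _ _ _
    _ < δ/2 + δ/2 := by
        refine add_lt_add hy ?_
        exact ht
    _ = δ := by ring

end Main

section Main
variable (p : ℝ≥0∞) [Fact (1 ≤ p)] (w : ℤ → ℂ)

lemma coord_dist_lt (x y : XSp p) (ε : ℝ) (h : ‖x - y‖ < ε) (i : ℤ) :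
    ‖(x : ℤ → ℂ) i - y i‖ < ε := by
  have h1 : ‖(x - y : XSp p) i‖ ≤ ‖x - y‖ := lp.norm_apply_le_norm (pne0 p) (x - y) i
  have h2 : ((x - y : XSp p) : ℤ → ℂ) i = x i - y i := by
    rw [lp.coeFn_sub]; rfl
  rw [h2] at h1
  exact lt_of_le_of_lt h1 h

/-- The core estimate: if some vector near `e_j` is mapped by `B^n` near `2·e_j`,
then the forward weight product is large and the backward one is small. -/
lemma coreEst (hp : p ≠ ∞) (B : XSp p →L[ℂ] XSp p)
    (hB : ∀ k : ℤ, B (lp.single p k 1) = w k • lp.single p (k - 1) 1)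
    (hw0 : ∀ k : ℤ, w k ≠ 0) (M : ℝ) (hM : 0 < M) (j : ℤ) (n : ℕ) (u : XSp p)
    (hu : ‖u - lp.single p j 1‖ < 1/(2*M+2))
    (hv : ‖(B^n) u - lp.single p j 2‖ < 1/(2*M+2)) :
    M < Pa w j n ∧ Qa w j n < 1/M := by
  set ε : ℝ := 1/(2*M+2) with hε
  have hεpos : 0 < ε := by rw [hε]; positivity
  have hε2 : (2*M+2) * ε = 1 := by rw [hε]; field_simp
  -- coordinates
  have hu' : ∀ i : ℤ, ‖(u : ℤ → ℂ) i - (lp.single p j 1 : XSp p) i‖ < ε :=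
    fun i => coord_dist_lt p _ _ _ hu i
  have hv' : ∀ i : ℤ, ‖((B^n) u : ℤ → ℂ) i - (lp.single p j 2 : XSp p) i‖ < ε :=
    fun i => coord_dist_lt p _ _ _ hv i
  rcases Nat.eq_zero_or_pos n with hn | hn
  · -- contradiction
    exfalso
    subst hn
    have h1 := hu' j
    have h2 := hv' j
    rw [pow_zero, ContinuousLinearMap.one_apply] at h2
    rw [single_coord, if_pos rfl] at h1 h2
    have : (1:ℝ) ≤ ‖(u : ℤ → ℂ) j - 1‖ + ‖(u : ℤ → ℂ) j - 2‖ := by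
      have := norm_sub_le ((u : ℤ → ℂ) j - 1) ((u : ℤ → ℂ) j - 2)
      have he : ((u : ℤ → ℂ) j - 1) - ((u : ℤ → ℂ) j - 2) = 1 := by ring
      rw [he] at this
      simpa using this
    nlinarith [hεpos, hM, hε2]
  constructor
  · -- forward estimate at coordinate j
    have hco := coord_Bpow p w hp B hB n u j
    have hA : ‖((B^n) u : ℤ → ℂ) j - 2‖ < ε := by
      have := hv' j; rwa [single_coord, if_pos rfl] at this
    have h2 : 2 - ε ≤ ‖((B^n) u : ℤ → ℂ) j‖ := by
      have h3 : ‖(2:ℂ)‖ - ‖((B^n) u : ℤ → ℂ) j‖ ≤ ‖(2:ℂ) - ((B^n) u : ℤ → ℂ) j‖ :=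
        norm_sub_norm_le _ _
      rw [norm_sub_rev] at h3
      have h4 : ‖(2:ℂ)‖ = 2 := by norm_num
      linarith
    have hB2 : ‖(u : ℤ → ℂ) (j + (n:ℤ))‖ < ε := by
      have := hu' (j + (n:ℤ))
      rwa [single_coord, if_neg (by omega), sub_zero] at this
    have h5 : ‖((B^n) u : ℤ → ℂ) j‖ = Pa w j n * ‖(u : ℤ → ℂ) (j + (n:ℤ))‖ := by
      rw [hco, norm_mul, ← norm_P w, P]
    have h6 : 2 - ε ≤ Pa w j n * ε := by
      rw [h5] at h2
      have := mul_le_mul_of_nonneg_left hB2.le (le_of_lt (Pa_pos w hw0 j n))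
      linarith
    have h7 : M * ε < 2 - ε := by nlinarith [hε2, hεpos]
    have h8 : M * ε < Pa w j n * ε := lt_of_lt_of_le h7 h6
    exact lt_of_mul_lt_mul_right h8 hεpos.le
  · -- backward estimate at coordinate j - n
    have hco := coord_Bpow p w hp B hB n u (j - (n:ℤ))
    rw [show j - (n:ℤ) + (n:ℤ) = j from by ring] at hco
    have hA : ‖((B^n) u : ℤ → ℂ) (j - (n:ℤ))‖ < ε := by
      have := hv' (j - (n:ℤ))
      rwa [single_coord, if_neg (by omega), sub_zero] at this
    have hB3 : 1 - ε ≤ ‖(u : ℤ → ℂ) j‖ := by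
      have h1 := hu' j
      rw [single_coord, if_pos rfl] at h1
      have h3 : ‖(1:ℂ)‖ - ‖(u : ℤ → ℂ) j‖ ≤ ‖(1:ℂ) - (u : ℤ → ℂ) j‖ :=
        norm_sub_norm_le _ _
      rw [norm_sub_rev] at h3
      have h4 : ‖(1:ℂ)‖ = 1 := by norm_num
      linarith
    have h5 : ‖((B^n) u : ℤ → ℂ) (j - (n:ℤ))‖ = Qa w j n * ‖(u : ℤ → ℂ) j‖ := by
      rw [hco, norm_mul, Qa, ← norm_prod]
    have hQ : Qa w j n * (1 - ε) < ε := by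
      rw [h5] at hA
      have := mul_le_mul_of_nonneg_left hB3 (le_of_lt (Qa_pos w hw0 j n))
      linarith
    have hgoal : Qa w j n * M < 1 := by
      nlinarith [hQ, hε2, hεpos, hM, Qa_pos w hw0 j n]
    rw [lt_div_iff₀ hM]
    exact hgoal

end Main

end BilShiftAux

/-- The direct sum operator `⊕_{0 ≤ s < l ≤ N} B^{r_l − r_s}` acting coordinatewise on
`X^{N(N+1)/2}`, the product indexed by the pairs `0 ≤ s < l ≤ N`. -/
noncomputable def pairDirectSum {X : Type*} [AddCommGroup X] [Module ℂ X]
    [TopologicalSpace X] [IsTopologicalAddGroup X] [ContinuousSMul ℂ X]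
    (B : X →L[ℂ] X) (N : ℕ) (rr : Fin (N + 1) → ℕ) :
    ({q : Fin (N + 1) × Fin (N + 1) // q.1 < q.2} → X) →L[ℂ]
      ({q : Fin (N + 1) × Fin (N + 1) // q.1 < q.2} → X) :=
  ContinuousLinearMap.pi
    (fun q => (B ^ (rr q.1.2 - rr q.1.1)).comp (ContinuousLinearMap.proj q))


namespace BilShiftAux
set_option linter.unusedSectionVars false
set_option maxHeartbeats 1000000

lemma pairDirectSum_apply {X : Type*} [AddCommGroup X] [Module ℂ X]
    [TopologicalSpace X] [IsTopologicalAddGroup X] [ContinuousSMul ℂ X]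
    (B : X →L[ℂ] X) (N : ℕ) (rr : Fin (N + 1) → ℕ)
    (g : {q : Fin (N + 1) × Fin (N + 1) // q.1 < q.2} → X)
    (q : {q : Fin (N + 1) × Fin (N + 1) // q.1 < q.2}) :
    pairDirectSum B N rr g q = (B ^ (rr q.1.2 - rr q.1.1)) (g q) := rfl

lemma pairDirectSum_pow_apply {X : Type*} [AddCommGroup X] [Module ℂ X]
    [TopologicalSpace X] [IsTopologicalAddGroup X] [ContinuousSMul ℂ X]
    (B : X →L[ℂ] X) (N : ℕ) (rr : Fin (N + 1) → ℕ) (n : ℕ)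
    (g : {q : Fin (N + 1) × Fin (N + 1) // q.1 < q.2} → X)
    (q : {q : Fin (N + 1) × Fin (N + 1) // q.1 < q.2}) :
    ((pairDirectSum B N rr) ^ n) g q = (B ^ ((rr q.1.2 - rr q.1.1) * n)) (g q) := by
  induction n generalizing g with
  | zero => simp
  | succ n ih =>
    rw [pow_succ, ContinuousLinearMap.mul_apply, ih (pairDirectSum B N rr g),
      pairDirectSum_apply, ← ContinuousLinearMap.mul_apply, ← pow_add, Nat.mul_succ]

section Main
variable (p : ℝ≥0∞) [Fact (1 ≤ p)] (w : ℤ → ℂ)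
  (B : lp (fun _ : ℤ => ℂ) p →L[ℂ] lp (fun _ : ℤ => ℂ) p)
  (F : Set (Set ℕ)) (N : ℕ) (rr : Fin (N + 1) → ℕ)

def PropI : Prop :=
  ∀ (U₀ : Set (lp (fun _ : ℤ => ℂ) p)) (U : Fin N → Set (lp (fun _ : ℤ => ℂ) p)),
    IsOpen U₀ → U₀.Nonempty → (∀ l, IsOpen (U l)) → (∀ l, (U l).Nonempty) →
    {k : ℕ | ((⋂ l : Fin N, (B ^ (rr l.succ * k)) ⁻¹' U l) ∩ U₀).Nonempty} ∈ F

def PropII : Prop :=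
  ∀ U V : Set ({q : Fin (N + 1) × Fin (N + 1) // q.1 < q.2} →
      lp (fun _ : ℤ => ℂ) p),
    IsOpen U → IsOpen V → U.Nonempty → V.Nonempty →
    {n : ℕ | (((pairDirectSum B N rr) ^ n) '' U ∩ V).Nonempty} ∈ F

def PropIII : Prop :=
  ∀ M : ℝ, 0 < M → ∀ j : ℤ, ∀ s l : Fin (N + 1), s < l →
    {m : ℕ | M <
        ∏ i ∈ Finset.Icc (j + 1) (j + ((m * (rr l - rr s) : ℕ) : ℤ)), ‖w i‖} ∈ F ∧
    {m : ℕ |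
        (∏ i ∈ Finset.Icc (j - ((m * (rr l - rr s) : ℕ) : ℤ) + 1) j, ‖w i‖)
          < 1 / M} ∈ F

def PropIII' : Prop :=
  ∀ M : ℝ, 0 < M → ∀ j : ℤ, ∀ s l : Fin (N + 1), s < l →
    {m : ℕ | M < Pa w j (m * (rr l - rr s))} ∈ F ∧
    {m : ℕ | Qa w j (m * (rr l - rr s)) < 1 / M} ∈ F

lemma PropIII_iff : PropIII w F N rr ↔ PropIII' w F N rr := by
  have h1 : ∀ (M : ℝ) (j : ℤ) (n : ℕ),
      {m : ℕ | M < ∏ i ∈ Finset.Icc (j + 1) (j + ((n : ℕ) : ℤ)), ‖w i‖}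
        = {m : ℕ | M < Pa w j n} := by
    intro M j n; rw [Pa, Icc_succ_left']
  have h2 : ∀ (M : ℝ) (j : ℤ) (n : ℕ),
      {m : ℕ | (∏ i ∈ Finset.Icc (j - ((n : ℕ) : ℤ) + 1) j, ‖w i‖) < 1/M}
        = {m : ℕ | Qa w j n < 1/M} := by
    intro M j n; rw [Qa, Icc_succ_left']
  constructor <;> intro h M hM j s l hsl <;> obtain ⟨hA, hB⟩ := h M hM j s l hsl
  · constructor
    · have : {m : ℕ | M < ∏ i ∈ Finset.Icc (j + 1) (j + ((m * (rr l - rr s) : ℕ) : ℤ)), ‖w i‖}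
          = {m : ℕ | M < Pa w j (m * (rr l - rr s))} := by
        ext m; rw [mem_setOf_eq, mem_setOf_eq, Pa, Icc_succ_left']
      rwa [this] at hA
    · have : {m : ℕ | (∏ i ∈ Finset.Icc (j - ((m * (rr l - rr s) : ℕ) : ℤ) + 1) j, ‖w i‖) < 1/M}
          = {m : ℕ | Qa w j (m * (rr l - rr s)) < 1/M} := by
        ext m; rw [mem_setOf_eq, mem_setOf_eq, Qa, Icc_succ_left']
      rwa [this] at hB
  · constructor
    · have : {m : ℕ | M < ∏ i ∈ Finset.Icc (j + 1) (j + ((m * (rr l - rr s) : ℕ) : ℤ)), ‖w i‖}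
          = {m : ℕ | M < Pa w j (m * (rr l - rr s))} := by
        ext m; rw [mem_setOf_eq, mem_setOf_eq, Pa, Icc_succ_left']
      rwa [this]
    · have : {m : ℕ | (∏ i ∈ Finset.Icc (j - ((m * (rr l - rr s) : ℕ) : ℤ) + 1) j, ‖w i‖) < 1/M}
          = {m : ℕ | Qa w j (m * (rr l - rr s)) < 1/M} := by
        ext m; rw [mem_setOf_eq, mem_setOf_eq, Qa, Icc_succ_left']
      rwa [this]

lemma I_implies_III' (hp : p ≠ ∞) (hw0 : ∀ k : ℤ, w k ≠ 0)
    (hB : ∀ k : ℤ, B (lp.single p k 1) = w k • lp.single p (k - 1) 1)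
    (hFmono : ∀ A ∈ F, ∀ A' : Set ℕ, A ⊆ A' → A' ∈ F)
    (hr0 : rr 0 = 0) (hrmono : StrictMono rr)
    (hI : PropI p B F N rr) : PropIII' w F N rr := by
  intro M hM j s l hsl
  classical
  set ε : ℝ := 1/(2*M+2) with hεdef
  have hε : 0 < ε := by rw [hεdef]; positivity
  set e : lp (fun _ : ℤ => ℂ) p := lp.single p j 1 with he
  set f2 : lp (fun _ : ℤ => ℂ) p := lp.single p j 2 with hf2
  set d : ℕ := rr l - rr s with hd
  set U₀ : Set (lp (fun _ : ℤ => ℂ) p) :=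
    if s = (0 : Fin (N+1)) then Metric.ball e ε else Set.univ with hU₀
  set U : Fin N → Set (lp (fun _ : ℤ => ℂ) p) := fun l' =>
    if l'.succ = l then Metric.ball f2 ε else
      if l'.succ = s then Metric.ball e ε else Set.univ with hU
  have hU₀o : IsOpen U₀ := by rw [hU₀]; split_ifs <;> [exact Metric.isOpen_ball; exact isOpen_univ]
  have hU₀ne : U₀.Nonempty := by
    rw [hU₀]; split_ifs
    · exact ⟨e, Metric.mem_ball_self hε⟩
    · exact Set.univ_nonempty
  have hUo : ∀ l', IsOpen (U l') := by
    intro l'; rw [hU]; dsimp only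
    split_ifs <;> first | exact Metric.isOpen_ball | exact isOpen_univ
  have hUne : ∀ l', (U l').Nonempty := by
    intro l'; rw [hU]; dsimp only
    split_ifs
    · exact ⟨f2, Metric.mem_ball_self hε⟩
    · exact ⟨e, Metric.mem_ball_self hε⟩
    · exact Set.univ_nonempty
  have hset := hI U₀ U hU₀o hU₀ne hUo hUne
  have hkey : ∀ k ∈ {k : ℕ | ((⋂ l : Fin N, (B ^ (rr l.succ * k)) ⁻¹' U l) ∩ U₀).Nonempty},
      M < Pa w j (k * d) ∧ Qa w j (k * d) < 1/M := by
    intro k hk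
    obtain ⟨z, hz⟩ := hk
    have hzi := hz.1
    have hz0 := hz.2
    set u : lp (fun _ : ℤ => ℂ) p := (B ^ (rr s * k)) z with hu'
    have hu : u ∈ Metric.ball e ε := by
      by_cases hs0 : s = 0
      · have h0 : rr s * k = 0 := by rw [hs0, hr0, zero_mul]
        rw [hu', h0, pow_zero, ContinuousLinearMap.one_apply]
        rw [hU₀, if_pos hs0] at hz0
        exact hz0
      · obtain ⟨s', hs'⟩ := Fin.exists_succ_eq_of_ne_zero hs0
        have h1 := Set.mem_iInter.mp hzi s'
        rw [hU] at h1; dsimp only at h1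
        rw [if_neg (by rw [hs']; exact hsl.ne), if_pos hs'] at h1
        rw [hu', ← hs']
        exact h1
    have hl0 : l ≠ 0 := by
      intro h; rw [h] at hsl
      simp at hsl
    obtain ⟨l', hl'⟩ := Fin.exists_succ_eq_of_ne_zero hl0
    have h2 := Set.mem_iInter.mp hzi l'
    rw [hU] at h2; dsimp only at h2
    rw [if_pos hl'] at h2
    have hle : rr s ≤ rr l := (hrmono hsl).le
    have hv : (B ^ (d * k)) u ∈ Metric.ball f2 ε := by
      rw [hu', ← ContinuousLinearMap.mul_apply, ← pow_add]
      have hexp : d * k + rr s * k = rr l'.succ * k := by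
        rw [hl', hd, Nat.sub_mul]
        exact Nat.sub_add_cancel (Nat.mul_le_mul_right _ hle)
      rw [hexp]
      exact h2
    have := coreEst p w hp B hB hw0 M hM j (d * k) u
      (by rw [← he, ← hεdef]; exact mem_ball_iff_norm.mp hu)
      (by rw [← hf2, ← hεdef]; exact mem_ball_iff_norm.mp hv)
    rwa [Nat.mul_comm d k] at this
  constructor
  · exact hFmono _ hset _ (fun k hk => (hkey k hk).1)
  · exact hFmono _ hset _ (fun k hk => (hkey k hk).2)

lemma II_implies_III' (hp : p ≠ ∞) (hw0 : ∀ k : ℤ, w k ≠ 0)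
    (hB : ∀ k : ℤ, B (lp.single p k 1) = w k • lp.single p (k - 1) 1)
    (hFmono : ∀ A ∈ F, ∀ A' : Set ℕ, A ⊆ A' → A' ∈ F)
    (hII : PropII p B F N rr) : PropIII' w F N rr := by
  intro M hM j s l hsl
  set ε : ℝ := 1/(2*M+2) with hεdef
  have hε : 0 < ε := by rw [hεdef]; positivity
  set e : lp (fun _ : ℤ => ℂ) p := lp.single p j 1 with he
  set f2 : lp (fun _ : ℤ => ℂ) p := lp.single p j 2 with hf2
  set d : ℕ := rr l - rr s with hd
  set q0 : {q : Fin (N + 1) × Fin (N + 1) // q.1 < q.2} := ⟨(s, l), hsl⟩ with hq0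
  set U : Set ({q : Fin (N + 1) × Fin (N + 1) // q.1 < q.2} → lp (fun _ : ℤ => ℂ) p) :=
    (fun g => g q0) ⁻¹' (Metric.ball e ε) with hU
  set V : Set ({q : Fin (N + 1) × Fin (N + 1) // q.1 < q.2} → lp (fun _ : ℤ => ℂ) p) :=
    (fun g => g q0) ⁻¹' (Metric.ball f2 ε) with hV
  have hset := hII U V ((continuous_apply q0).isOpen_preimage _ Metric.isOpen_ball)
    ((continuous_apply q0).isOpen_preimage _ Metric.isOpen_ball)
    ⟨fun _ => e, by rw [hU]; exact Metric.mem_ball_self hε⟩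
    ⟨fun _ => f2, by rw [hV]; exact Metric.mem_ball_self hε⟩
  have hkey : ∀ n ∈ {n : ℕ | (((pairDirectSum B N rr) ^ n) '' U ∩ V).Nonempty},
      M < Pa w j (n * d) ∧ Qa w j (n * d) < 1/M := by
    intro n hn
    obtain ⟨y, hy⟩ := hn
    obtain ⟨g, hgU, hgy⟩ := hy.1
    have hyV := hy.2
    set u : lp (fun _ : ℤ => ℂ) p := g q0 with hudef
    have hu : u ∈ Metric.ball e ε := hgU
    have hv : (B ^ (d * n)) u ∈ Metric.ball f2 ε := by
      have := pairDirectSum_pow_apply B N rr n g q0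
      rw [hgy] at this
      have hd' : rr (q0.1).2 - rr (q0.1).1 = d := by rw [hq0, hd]
      rw [hd'] at this
      rw [hudef, ← this]
      exact hyV
    have := coreEst p w hp B hB hw0 M hM j (d * n) u
      (by rw [← he, ← hεdef]; exact mem_ball_iff_norm.mp hu)
      (by rw [← hf2, ← hεdef]; exact mem_ball_iff_norm.mp hv)
    rwa [Nat.mul_comm d n] at this
  constructor
  · exact hFmono _ hset _ (fun k hk => (hkey k hk).1)
  · exact hFmono _ hset _ (fun k hk => (hkey k hk).2)

end Main

section Main
variable (p : ℝ≥0∞) [Fact (1 ≤ p)] (w : ℤ → ℂ)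

lemma exists_G (F : Set (Set ℕ)) (N : ℕ) (rr : Fin (N + 1) → ℕ)
    (hFmono : ∀ A ∈ F, ∀ A' : Set ℕ, A ⊆ A' → A' ∈ F)
    (hFinter : ∀ A ∈ F, ∀ A' ∈ F, A ∩ A' ∈ F)
    (hN : 1 ≤ N) (hIII' : PropIII' w F N rr) (M : ℝ) (hM : 0 < M) (T : Finset ℤ) :
    ∃ G ∈ F, ∀ k ∈ G, ∀ j ∈ T, ∀ s l : Fin (N+1), s < l →
      M < Pa w j (k * (rr l - rr s)) ∧ Qa w j (k * (rr l - rr s)) < 1/M := by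
  classical
  have h01 : (0 : Fin (N+1)) < ⟨1, by omega⟩ := by
    rw [Fin.lt_def]; simp
  have hFne : F.Nonempty := ⟨_, (hIII' 1 one_pos 0 0 ⟨1, by omega⟩ h01).1⟩
  set S : Finset (ℤ × (Fin (N+1) × Fin (N+1))) :=
    T ×ˢ (Finset.univ.filter (fun q : Fin (N+1) × Fin (N+1) => q.1 < q.2)) with hS
  set f : ℤ × (Fin (N+1) × Fin (N+1)) → Set ℕ := fun jq =>
    {m : ℕ | M < Pa w jq.1 (m * (rr jq.2.2 - rr jq.2.1))} ∩
    {m : ℕ | Qa w jq.1 (m * (rr jq.2.2 - rr jq.2.1)) < 1/M} with hf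
  have hfF : ∀ jq ∈ S, f jq ∈ F := by
    intro jq hjq
    rw [hS, Finset.mem_product] at hjq
    have hq := (Finset.mem_filter.mp hjq.2).2
    obtain ⟨hA, hB⟩ := hIII' M hM jq.1 jq.2.1 jq.2.2 hq
    exact hFinter _ hA _ hB
  refine ⟨⋂ jq ∈ S, f jq, F_biInter F hFmono hFinter hFne S f hfF, ?_⟩
  intro k hk j hj s l hsl
  have hjq : (j, (s, l)) ∈ S := by
    rw [hS, Finset.mem_product]
    exact ⟨hj, Finset.mem_filter.mpr ⟨Finset.mem_univ _, hsl⟩⟩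
  have := Set.mem_iInter₂.mp hk (j, (s, l)) hjq
  exact this

lemma norm_sAp_div (hp : p ≠ ∞) (hw0 : ∀ k : ℤ, w k ≠ 0) (M : ℝ) (hM : 0 < M)
    (n : ℕ) (t : Finset ℤ) (c : ℤ → ℂ) (h : ∀ j ∈ t, M < Pa w j n) :
    ‖sAp p w n t c‖ ≤ (∑ j ∈ t, ‖c j‖) / M := by
  refine (norm_sAp_le p w hp n t c).trans ?_
  rw [Finset.sum_div]
  refine Finset.sum_le_sum (fun j hj => ?_)
  rw [div_eq_mul_inv, div_eq_mul_inv]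
  refine mul_le_mul_of_nonneg_left ?_ (norm_nonneg _)
  exact inv_anti₀ hM (h j hj).le

lemma norm_BfsV_div (hp : p ≠ ∞)
    (B : lp (fun _ : ℤ => ℂ) p →L[ℂ] lp (fun _ : ℤ => ℂ) p)
    (hB : ∀ k : ℤ, B (lp.single p k 1) = w k • lp.single p (k - 1) 1)
    (M : ℝ) (hM : 0 < M)
    (n : ℕ) (t : Finset ℤ) (c : ℤ → ℂ) (h : ∀ j ∈ t, Qa w j n < 1/M) :
    ‖(B^n) (fsV p t c)‖ ≤ (∑ j ∈ t, ‖c j‖) / M := by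
  refine (norm_Bpow_fsV_le p w B hp hB n t c).trans ?_
  rw [Finset.sum_div]
  refine Finset.sum_le_sum (fun j hj => ?_)
  calc Qa w j n * ‖c j‖ ≤ (1/M) * ‖c j‖ :=
        mul_le_mul_of_nonneg_right (h j hj).le (norm_nonneg _)
    _ = ‖c j‖ / M := by ring

end Main

section Main
variable (p : ℝ≥0∞) [Fact (1 ≤ p)] (w : ℤ → ℂ)

lemma III'_implies_II (B : lp (fun _ : ℤ => ℂ) p →L[ℂ] lp (fun _ : ℤ => ℂ) p)
    (F : Set (Set ℕ)) (N : ℕ) (rr : Fin (N + 1) → ℕ)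
    (hp : p ≠ ∞) (hw0 : ∀ k : ℤ, w k ≠ 0)
    (hB : ∀ k : ℤ, B (lp.single p k 1) = w k • lp.single p (k - 1) 1)
    (hFmono : ∀ A ∈ F, ∀ A' : Set ℕ, A ⊆ A' → A' ∈ F)
    (hFinter : ∀ A ∈ F, ∀ A' ∈ F, A ∩ A' ∈ F)
    (hN : 1 ≤ N) (hIII' : PropIII' w F N rr) : PropII p B F N rr := by
  intro U V hUo hVo hUne hVne
  classical
  obtain ⟨g, hgU⟩ := hUne
  obtain ⟨h, hhV⟩ := hVne
  obtain ⟨δ, hδ, hballU⟩ := Metric.isOpen_iff.mp hUo g hgU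
  obtain ⟨δ', hδ', hballV⟩ := Metric.isOpen_iff.mp hVo h hhV
  -- finitely supported approximations in every coordinate
  have happrox : ∀ (x : lp (fun _ : ℤ => ℂ) p) (r : ℝ), 0 < r →
      ∃ (t : Finset ℤ) (c : ℤ → ℂ), ‖fsV p t c - x‖ < r := by
    intro x r hr
    obtain ⟨t, c, ε', hε', hsub⟩ :=
      exists_ball_fsV p hp (Metric.isOpen_ball (x := x) (ε := r)) ⟨x, Metric.mem_ball_self hr⟩
    have := hsub (Metric.mem_ball_self hε')
    rw [Metric.mem_ball, dist_eq_norm] at this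
    exact ⟨t, c, this⟩
  have hU2 : ∀ q : {q : Fin (N + 1) × Fin (N + 1) // q.1 < q.2},
      ∃ (t : Finset ℤ) (c : ℤ → ℂ), ‖fsV p t c - g q‖ < δ/2 :=
    fun q => happrox (g q) (δ/2) (by linarith)
  have hV2 : ∀ q : {q : Fin (N + 1) × Fin (N + 1) // q.1 < q.2},
      ∃ (t : Finset ℤ) (c : ℤ → ℂ), ‖fsV p t c - h q‖ < δ'/2 :=
    fun q => happrox (h q) (δ'/2) (by linarith)
  choose tU cU hcU using hU2
  choose tV cV hcV using hV2
  set C : ℝ := ∑ q : {q : Fin (N + 1) × Fin (N + 1) // q.1 < q.2},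
    ((∑ j ∈ tU q, ‖cU q j‖) + (∑ j ∈ tV q, ‖cV q j‖)) with hC
  have hC0 : 0 ≤ C := Finset.sum_nonneg (fun q _ => by positivity)
  have hCq : ∀ q, (∑ j ∈ tU q, ‖cU q j‖) ≤ C ∧ (∑ j ∈ tV q, ‖cV q j‖) ≤ C := by
    intro q
    have h1 : ((∑ j ∈ tU q, ‖cU q j‖) + (∑ j ∈ tV q, ‖cV q j‖)) ≤ C := by
      rw [hC]
      exact Finset.single_le_sum (f := fun q =>
        ((∑ j ∈ tU q, ‖cU q j‖) + (∑ j ∈ tV q, ‖cV q j‖)))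
        (fun q _ => by positivity) (Finset.mem_univ q)
    constructor
    · have : (0:ℝ) ≤ ∑ j ∈ tV q, ‖cV q j‖ := by positivity
      linarith
    · have : (0:ℝ) ≤ ∑ j ∈ tU q, ‖cU q j‖ := by positivity
      linarith
  set ρ : ℝ := min δ δ' with hρdef
  have hρ : 0 < ρ := lt_min hδ hδ'
  set M : ℝ := 2*(C+1)/ρ with hMdef
  have hM : 0 < M := by rw [hMdef]; positivity
  have hCM : C / M < ρ/2 := by
    rw [div_lt_iff₀ hM]
    have : ρ/2 * M = C + 1 := by rw [hMdef]; field_simp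
    linarith
  set T : Finset ℤ := Finset.univ.biUnion (fun q => tU q ∪ tV q) with hT
  obtain ⟨G, hGF, hGk⟩ := exists_G w F N rr hFmono hFinter hN hIII' M hM T
  refine hFmono G hGF _ ?_
  intro n hn
  set z : {q : Fin (N + 1) × Fin (N + 1) // q.1 < q.2} → lp (fun _ : ℤ => ℂ) p :=
    fun q => fsV p (tU q) (cU q) + sAp p w ((rr q.1.2 - rr q.1.1) * n) (tV q) (cV q) with hz
  -- bounds
  have hTU : ∀ q, ∀ j ∈ tU q, j ∈ T := by
    intro q j hj
    rw [hT]; exact Finset.mem_biUnion.mpr ⟨q, Finset.mem_univ _, Finset.mem_union_left _ hj⟩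
  have hTV : ∀ q, ∀ j ∈ tV q, j ∈ T := by
    intro q j hj
    rw [hT]; exact Finset.mem_biUnion.mpr ⟨q, Finset.mem_univ _, Finset.mem_union_right _ hj⟩
  have hsmall : ∀ q, ‖sAp p w ((rr q.1.2 - rr q.1.1) * n) (tV q) (cV q)‖ ≤ C / M := by
    intro q
    have hfor : ∀ j ∈ tV q, M < Pa w j ((rr q.1.2 - rr q.1.1) * n) := by
      intro j hj
      have := (hGk n hn j (hTV q j hj) q.1.1 q.1.2 q.2).1
      rwa [Nat.mul_comm] at this
    refine (norm_sAp_div p w hp hw0 M hM _ _ _ hfor).trans ?_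
    exact (div_le_div_iff_of_pos_right hM).mpr (hCq q).2
  have hsmall2 : ∀ q, ‖(B ^ ((rr q.1.2 - rr q.1.1) * n)) (fsV p (tU q) (cU q))‖ ≤ C / M := by
    intro q
    have hback : ∀ j ∈ tU q, Qa w j ((rr q.1.2 - rr q.1.1) * n) < 1/M := by
      intro j hj
      have := (hGk n hn j (hTU q j hj) q.1.1 q.1.2 q.2).2
      rwa [Nat.mul_comm] at this
    refine (norm_BfsV_div p w hp B hB M hM _ _ _ hback).trans ?_
    exact (div_le_div_iff_of_pos_right hM).mpr (hCq q).1
  have hzU : z ∈ U := by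
    refine hballU ?_
    rw [Metric.mem_ball]
    rw [dist_pi_lt_iff hδ]
    intro q
    rw [dist_eq_norm, hz]
    have : fsV p (tU q) (cU q) + sAp p w ((rr q.1.2 - rr q.1.1) * n) (tV q) (cV q) - g q
        = (fsV p (tU q) (cU q) - g q) + sAp p w ((rr q.1.2 - rr q.1.1) * n) (tV q) (cV q) := by
      abel
    rw [this]
    have h1 := norm_add_le (fsV p (tU q) (cU q) - g q)
      (sAp p w ((rr q.1.2 - rr q.1.1) * n) (tV q) (cV q))
    have h2 := hcU q
    have h3 := hsmall q
    have hρδ : ρ ≤ δ := min_le_left _ _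
    calc ‖(fsV p (tU q) (cU q) - g q) + sAp p w ((rr q.1.2 - rr q.1.1) * n) (tV q) (cV q)‖
        ≤ ‖fsV p (tU q) (cU q) - g q‖ + ‖sAp p w ((rr q.1.2 - rr q.1.1) * n) (tV q) (cV q)‖ := h1
      _ < δ/2 + ρ/2 := by linarith [lt_of_le_of_lt h3 hCM]
      _ ≤ δ := by linarith
  have hzV : ((pairDirectSum B N rr) ^ n) z ∈ V := by
    refine hballV ?_
    rw [Metric.mem_ball, dist_pi_lt_iff hδ']
    intro q
    rw [dist_eq_norm, pairDirectSum_pow_apply, hz]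
    have heq : (B ^ ((rr q.1.2 - rr q.1.1) * n))
          (fsV p (tU q) (cU q) + sAp p w ((rr q.1.2 - rr q.1.1) * n) (tV q) (cV q))
        = (B ^ ((rr q.1.2 - rr q.1.1) * n)) (fsV p (tU q) (cU q)) + fsV p (tV q) (cV q) := by
      rw [map_add, Bpow_sAp_self p w B hp hB hw0]
    rw [heq]
    have h2 := hcV q
    have h3 := hsmall2 q
    have hρδ' : ρ ≤ δ' := min_le_right _ _
    have hre : (B ^ ((rr q.1.2 - rr q.1.1) * n)) (fsV p (tU q) (cU q)) + fsV p (tV q) (cV q) - h q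
        = (fsV p (tV q) (cV q) - h q)
          + (B ^ ((rr q.1.2 - rr q.1.1) * n)) (fsV p (tU q) (cU q)) := by abel
    rw [hre]
    calc ‖(fsV p (tV q) (cV q) - h q)
          + (B ^ ((rr q.1.2 - rr q.1.1) * n)) (fsV p (tU q) (cU q))‖
        ≤ ‖fsV p (tV q) (cV q) - h q‖
          + ‖(B ^ ((rr q.1.2 - rr q.1.1) * n)) (fsV p (tU q) (cU q))‖ := norm_add_le _ _
      _ < δ'/2 + ρ/2 := by linarith [lt_of_le_of_lt h3 hCM]
      _ ≤ δ' := by linarith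
  exact ⟨((pairDirectSum B N rr) ^ n) z, ⟨z, hzU, rfl⟩, hzV⟩

end Main

section Main
variable (p : ℝ≥0∞) [Fact (1 ≤ p)] (w : ℤ → ℂ)

lemma III'_implies_I (B : lp (fun _ : ℤ => ℂ) p →L[ℂ] lp (fun _ : ℤ => ℂ) p)
    (F : Set (Set ℕ)) (N : ℕ) (rr : Fin (N + 1) → ℕ)
    (hp : p ≠ ∞) (hw0 : ∀ k : ℤ, w k ≠ 0)
    (hB : ∀ k : ℤ, B (lp.single p k 1) = w k • lp.single p (k - 1) 1)
    (hFmono : ∀ A ∈ F, ∀ A' : Set ℕ, A ⊆ A' → A' ∈ F)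
    (hFinter : ∀ A ∈ F, ∀ A' ∈ F, A ∩ A' ∈ F)
    (hN : 1 ≤ N) (hr0 : rr 0 = 0) (hrmono : StrictMono rr)
    (hIII' : PropIII' w F N rr) : PropI p B F N rr := by
  intro U₀ U hU₀o hU₀ne hUo hUne
  classical
  haveI : Nonempty (Fin N) := ⟨⟨0, hN⟩⟩
  obtain ⟨t₀, c₀, ε₀, hε₀, hball₀⟩ := exists_ball_fsV p hp hU₀o hU₀ne
  choose t c ε hε hball using fun l => exists_ball_fsV p hp (hUo l) (hUne l)
  set C : ℝ := (∑ j ∈ t₀, ‖c₀ j‖) + ∑ l : Fin N, ∑ j ∈ t l, ‖c l j‖ with hCdef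
  have hC0 : 0 ≤ C := by rw [hCdef]; positivity
  have hC0' : (∑ j ∈ t₀, ‖c₀ j‖) ≤ C := by
    rw [hCdef]
    have : (0:ℝ) ≤ ∑ l : Fin N, ∑ j ∈ t l, ‖c l j‖ := by positivity
    linarith
  have hCl : ∀ l' : Fin N, (∑ j ∈ t l', ‖c l' j‖) ≤ C := by
    intro l'
    have h1 : (∑ j ∈ t l', ‖c l' j‖) ≤ ∑ l : Fin N, ∑ j ∈ t l, ‖c l j‖ :=
      Finset.single_le_sum (f := fun l => ∑ j ∈ t l, ‖c l j‖)
        (fun l _ => by positivity) (Finset.mem_univ l')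
    have h2 : (0:ℝ) ≤ ∑ j ∈ t₀, ‖c₀ j‖ := by positivity
    rw [hCdef]; linarith
  set εm : ℝ := min ε₀ (Finset.univ.inf' Finset.univ_nonempty ε) with hεmdef
  have hεm : 0 < εm := by
    rw [hεmdef]
    refine lt_min hε₀ ?_
    rw [Finset.lt_inf'_iff]
    exact fun l _ => hε l
  have hεm0 : εm ≤ ε₀ := min_le_left _ _
  have hεml : ∀ l', εm ≤ ε l' :=
    fun l' => (min_le_right _ _).trans (Finset.inf'_le _ (Finset.mem_univ l'))
  set M : ℝ := ((N:ℝ)+1)*(C+1)/εm with hMdef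
  have hM : 0 < M := by rw [hMdef]; positivity
  have hNCM : (N:ℝ) * (C/M) < εm := by
    have hMεm : M * εm = ((N:ℝ)+1)*(C+1) := by rw [hMdef]; field_simp
    rw [mul_div_assoc']
    rw [div_lt_iff₀ hM]
    nlinarith [hC0, Nat.cast_nonneg (α := ℝ) N]
  set T : Finset ℤ := t₀ ∪ Finset.univ.biUnion t with hT
  have hT₀ : ∀ j ∈ t₀, j ∈ T := fun j hj => Finset.mem_union_left _ hj
  have hTl : ∀ l' : Fin N, ∀ j ∈ t l', j ∈ T := fun l' j hj =>
    Finset.mem_union_right _ (Finset.mem_biUnion.mpr ⟨l', Finset.mem_univ _, hj⟩)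
  obtain ⟨G, hGF, hGk⟩ := exists_G w F N rr hFmono hFinter hN hIII' M hM T
  refine hFmono G hGF _ ?_
  intro k hk
  set z : lp (fun _ : ℤ => ℂ) p :=
    fsV p t₀ c₀ + ∑ l' : Fin N, sAp p w (rr l'.succ * k) (t l') (c l') with hzdef
  -- forward smallness of the correction terms
  have hsmall : ∀ l' : Fin N, ‖sAp p w (rr l'.succ * k) (t l') (c l')‖ ≤ C/M := by
    intro l'
    have hfor : ∀ j ∈ t l', M < Pa w j (rr l'.succ * k) := by
      intro j hj
      have := (hGk k hk j (hTl l' j hj) 0 l'.succ (Fin.succ_pos l')).1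
      rwa [hr0, Nat.sub_zero, Nat.mul_comm] at this
    exact (norm_sAp_div p w hp hw0 M hM _ _ _ hfor).trans
      ((div_le_div_iff_of_pos_right hM).mpr (hCl l'))
  -- z belongs to U₀
  have hzU₀ : z ∈ U₀ := by
    refine hball₀ ?_
    rw [mem_ball_iff_norm, hzdef, add_sub_cancel_left]
    calc ‖∑ l' : Fin N, sAp p w (rr l'.succ * k) (t l') (c l')‖
        ≤ ∑ l' : Fin N, ‖sAp p w (rr l'.succ * k) (t l') (c l')‖ := norm_sum_le _ _
      _ ≤ ∑ _l' : Fin N, C/M := Finset.sum_le_sum (fun l' _ => hsmall l')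
      _ = (N:ℝ) * (C/M) := by
          rw [Finset.sum_const, Finset.card_univ, Fintype.card_fin, nsmul_eq_mul]
      _ < εm := hNCM
      _ ≤ ε₀ := hεm0
  -- B^(r_l k) z belongs to U l
  have hzUl : ∀ l' : Fin N, (B ^ (rr l'.succ * k)) z ∈ U l' := by
    intro l'
    set a : ℕ := rr l'.succ * k with hadef
    refine hball l' ?_
    rw [mem_ball_iff_norm]
    -- decompose
    have hsum : (B^a) z = (B^a) (fsV p t₀ c₀)
        + ∑ l'' : Fin N, (B^a) (sAp p w (rr l''.succ * k) (t l'') (c l'')) := by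
      rw [hzdef, map_add, map_sum]
    have hsplit : ∑ l'' : Fin N, (B^a) (sAp p w (rr l''.succ * k) (t l'') (c l''))
        = fsV p (t l') (c l')
          + ∑ l'' ∈ Finset.univ.erase l', (B^a) (sAp p w (rr l''.succ * k) (t l'') (c l'')) := by
      rw [← Finset.add_sum_erase _ _ (Finset.mem_univ l'), hadef,
        Bpow_sAp_self p w B hp hB hw0]
    have hdiff : (B^a) z - fsV p (t l') (c l') = (B^a) (fsV p t₀ c₀)
        + ∑ l'' ∈ Finset.univ.erase l', (B^a) (sAp p w (rr l''.succ * k) (t l'') (c l'')) := by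
      rw [hsum, hsplit]; abel
    -- bound the x-term
    have hx : ‖(B^a) (fsV p t₀ c₀)‖ ≤ C/M := by
      have hback : ∀ j ∈ t₀, Qa w j a < 1/M := by
        intro j hj
        have := (hGk k hk j (hT₀ j hj) 0 l'.succ (Fin.succ_pos l')).2
        rwa [hr0, Nat.sub_zero, Nat.mul_comm] at this
      exact (norm_BfsV_div p w hp B hB M hM _ _ _ hback).trans
        ((div_le_div_iff_of_pos_right hM).mpr hC0')
    -- bound the cross terms
    have hterm : ∀ l'' ∈ Finset.univ.erase l',
        ‖(B^a) (sAp p w (rr l''.succ * k) (t l'') (c l''))‖ ≤ C/M := by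
      intro l'' hl''
      have hne : l'' ≠ l' := Finset.ne_of_mem_erase hl''
      rcases lt_or_gt_of_ne hne with hlt | hgt
      · -- l'' < l' : backward terms
        have hsucc : l''.succ < l'.succ := Fin.succ_lt_succ_iff.mpr hlt
        have hle : rr l''.succ ≤ rr l'.succ := (hrmono hsucc).le
        have hle' : rr l''.succ * k ≤ a := by
          rw [hadef]; exact Nat.mul_le_mul_right _ hle
        have hsplit2 : a = (rr l'.succ - rr l''.succ) * k + rr l''.succ * k := by
          rw [Nat.sub_mul]
          exact (Nat.sub_add_cancel hle').symm
        rw [hsplit2, pow_add, ContinuousLinearMap.mul_apply,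
          Bpow_sAp_self p w B hp hB hw0]
        have hback : ∀ j ∈ t l'', Qa w j ((rr l'.succ - rr l''.succ) * k) < 1/M := by
          intro j hj
          have := (hGk k hk j (hTl l'' j hj) l''.succ l'.succ hsucc).2
          rwa [Nat.mul_comm] at this
        exact (norm_BfsV_div p w hp B hB M hM _ _ _ hback).trans
          ((div_le_div_iff_of_pos_right hM).mpr (hCl l''))
      · -- l' < l'' : forward terms
        have hsucc : l'.succ < l''.succ := Fin.succ_lt_succ_iff.mpr hgt
        have hle : rr l'.succ ≤ rr l''.succ := (hrmono hsucc).le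
        have hab : a + (rr l''.succ - rr l'.succ) * k = rr l''.succ * k := by
          rw [hadef, Nat.sub_mul]
          exact Nat.add_sub_cancel' (Nat.mul_le_mul_right _ hle)
        rw [show rr l''.succ * k = a + (rr l''.succ - rr l'.succ) * k from hab.symm,
          Bpow_sAp p w B hp hB hw0]
        have hfor : ∀ j ∈ t l'', M < Pa w j ((rr l''.succ - rr l'.succ) * k) := by
          intro j hj
          have := (hGk k hk j (hTl l'' j hj) l'.succ l''.succ hsucc).1
          rwa [Nat.mul_comm] at this
        exact (norm_sAp_div p w hp hw0 M hM _ _ _ hfor).trans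
          ((div_le_div_iff_of_pos_right hM).mpr (hCl l''))
    -- total bound
    rw [hdiff]
    have hNR : ((N - 1 : ℕ) : ℝ) = (N:ℝ) - 1 := by
      rw [Nat.cast_sub hN, Nat.cast_one]
    calc ‖(B^a) (fsV p t₀ c₀)
          + ∑ l'' ∈ Finset.univ.erase l', (B^a) (sAp p w (rr l''.succ * k) (t l'') (c l''))‖
        ≤ ‖(B^a) (fsV p t₀ c₀)‖
          + ‖∑ l'' ∈ Finset.univ.erase l', (B^a) (sAp p w (rr l''.succ * k) (t l'') (c l''))‖ :=
          norm_add_le _ _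
      _ ≤ C/M + ∑ _l'' ∈ Finset.univ.erase l', C/M := by
          refine add_le_add hx ((norm_sum_le _ _).trans (Finset.sum_le_sum hterm))
      _ = C/M + ((N - 1 : ℕ) : ℝ) * (C/M) := by
          rw [Finset.sum_const, nsmul_eq_mul, Finset.card_erase_of_mem (Finset.mem_univ _),
            Finset.card_univ, Fintype.card_fin]
      _ = (N:ℝ) * (C/M) := by rw [hNR]; ring
      _ < εm := hNCM
      _ ≤ ε l' := hεml l'
  exact ⟨z, Set.mem_inter (Set.mem_iInter.mpr hzUl) hzU₀⟩

end Main

end BilShiftAux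

/-- Characterization of d-F tuples of powers of a bilateral weighted backward shift
`B_w` on `ℓ^p(ℤ, ℂ)` (`1 ≤ p < ∞`), for a filter family `F` on `ℕ` and exponents
`0 = r₀ < 1 ≤ r₁ < ⋯ < r_N`: (i) `(B_w^{r₁}, …, B_w^{r_N})` is d-F, (ii) the direct sum
`⊕_{0 ≤ s < l ≤ N} B_w^{r_l − r_s}` is an F-operator, (iii) the weight-product
conditions hold along `F`. -/
theorem bilateralShift_dF_characterization
    (p : ℝ≥0∞) [Fact (1 ≤ p)] (hp : p ≠ ∞)
    (w : ℤ → ℂ) (hwb : ∃ c : ℝ, ∀ k : ℤ, ‖w k‖ ≤ c) (hw0 : ∀ k : ℤ, w k ≠ 0)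
    (B : lp (fun _ : ℤ => ℂ) p →L[ℂ] lp (fun _ : ℤ => ℂ) p)
    (hB : ∀ k : ℤ, B (lp.single p k 1) = w k • lp.single p (k - 1) 1)
    (F : Set (Set ℕ))
    (hFinf : ∀ A ∈ F, A.Infinite)
    (hFmono : ∀ A ∈ F, ∀ A' : Set ℕ, A ⊆ A' → A' ∈ F)
    (hFinter : ∀ A ∈ F, ∀ A' ∈ F, A ∩ A' ∈ F)
    (N : ℕ) (hN : 1 ≤ N) (rr : Fin (N + 1) → ℕ)
    (hr0 : rr 0 = 0) (hr1 : 1 ≤ rr 1) (hrmono : StrictMono rr) :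
    ((∀ (U₀ : Set (lp (fun _ : ℤ => ℂ) p)) (U : Fin N → Set (lp (fun _ : ℤ => ℂ) p)),
        IsOpen U₀ → U₀.Nonempty → (∀ l, IsOpen (U l)) → (∀ l, (U l).Nonempty) →
        {k : ℕ | ((⋂ l : Fin N, (B ^ (rr l.succ * k)) ⁻¹' U l) ∩ U₀).Nonempty} ∈ F) ↔
      (∀ U V : Set ({q : Fin (N + 1) × Fin (N + 1) // q.1 < q.2} →
          lp (fun _ : ℤ => ℂ) p),
        IsOpen U → IsOpen V → U.Nonempty → V.Nonempty →
        {n : ℕ | (((pairDirectSum B N rr) ^ n) '' U ∩ V).Nonempty} ∈ F)) ∧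
    ((∀ U V : Set ({q : Fin (N + 1) × Fin (N + 1) // q.1 < q.2} →
          lp (fun _ : ℤ => ℂ) p),
        IsOpen U → IsOpen V → U.Nonempty → V.Nonempty →
        {n : ℕ | (((pairDirectSum B N rr) ^ n) '' U ∩ V).Nonempty} ∈ F) ↔
      (∀ M : ℝ, 0 < M → ∀ j : ℤ, ∀ s l : Fin (N + 1), s < l →
        {m : ℕ | M <
            ∏ i ∈ Finset.Icc (j + 1) (j + ((m * (rr l - rr s) : ℕ) : ℤ)), ‖w i‖} ∈ F ∧
        {m : ℕ |
            (∏ i ∈ Finset.Icc (j - ((m * (rr l - rr s) : ℕ) : ℤ) + 1) j, ‖w i‖)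
              < 1 / M} ∈ F)) := by
  have h1 := BilShiftAux.I_implies_III' p w B F N rr hp hw0 hB hFmono hr0 hrmono
  have h2 := BilShiftAux.III'_implies_I p w B F N rr hp hw0 hB hFmono hFinter hN hr0 hrmono
  have h3 := BilShiftAux.II_implies_III' p w B F N rr hp hw0 hB hFmono
  have h4 := BilShiftAux.III'_implies_II p w B F N rr hp hw0 hB hFmono hFinter hN
  have h5 := BilShiftAux.PropIII_iff w F N rr
  exact ⟨⟨fun h => h4 (h1 h), fun h => h2 (h3 h)⟩,
    ⟨fun h => h5.mpr (h3 h), fun h => h4 (h5.mp h)⟩⟩
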